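/- Let G be a cubic graph, F a matching in G with |F| = 4, and suppose G is theta-connected. If G \ F has a cut-edge f0, then there exists Y ⊆ V(G) with δ_G(Y) = F ∪ {f0}, |Y| = 5, and G[Y] contains a cycle of length exactly 5. -/

import Mathlib

open SimpleGraph

/-- `edgeCut G Y` is `δ_G(Y)`: the set of edges of `G` with exactly one end in `Y`. -/
def edgeCut {V : Type*} (G : SimpleGraph V) (Y : Finset V) : Set (Sym2 V) :=
  {e | e ∈ G.edgeSet ∧ ∃ u v : V, e = s(u, v) ∧ u ∈ Y ∧ v ∉ Y}

/-- A graph is theta-connected if it is cubic, has girth at least five, and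
`|δ_G(X)| ≥ 6` for all `X` with `|X|, |V ∖ X| ≥ 6`. -/
def ThetaConnected {V : Type*} [Fintype V] [DecidableEq V]
    (G : SimpleGraph V) [DecidableRel G.Adj] : Prop :=
  (∀ v, G.degree v = 3) ∧ 5 ≤ G.girth ∧
  ∀ X : Finset V, 6 ≤ X.card → 6 ≤ Xᶜ.card → 6 ≤ (edgeCut G X).ncard

/-!
The vertices `X` reachable from one end of `f0` in `G ∖ (F ∪ {f0})` satisfy `δ(X) ⊆ F ∪ {f0}`,
so by theta-connectivity one side `Y` of this cut has at most five vertices. Each vertex of `Y`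
meets at most one edge of the matching `F`, so `|δ(Y)| ≤ |Y| + 1`, and the degree count
`3|Y| = 2 e(G[Y]) + |δ(Y)|` gives `e(G[Y]) ≥ |Y|`: the graph `G[Y]` has a cycle. By the girth
condition this cycle has length five and passes through all of `Y`; a shortest cycle has no
chord, so `e(G[Y]) = 5` and `|δ(Y)| = 15 - 10 = 5`, which forces `δ(Y) = F ∪ {f0}`.
-/

open Finset

namespace SimpleGraph

variable {V : Type*} {G : SimpleGraph V}

lemma IsAcyclic.card_edgeFinset_lt_card [Fintype V] [Nonempty V] [DecidableRel G.Adj]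
    (hG : G.IsAcyclic) : #G.edgeFinset < Fintype.card V := by
  classical
  obtain ⟨T, hGT, -, hT⟩ := connected_top.exists_isTree_le_of_le_of_isAcyclic le_top hG
  have := hT.card_edgeFinset
  have := card_le_card (edgeFinset_mono hGT)
  omega

/-- Closing either arc of the cycle with the chord gives a cycle. -/
lemma Walk.IsCycle.two_mul_girth_le_of_adj {p q : V} {c : G.Walk p p} (hc : c.IsCycle)
    (hq : q ∈ c.support) (hpq : G.Adj p q) (hchord : s(p, q) ∉ c.edges) :
    2 * G.girth ≤ c.length + 2 := by
  classical
  set A := c.takeUntil q hq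
  set B := c.dropUntil q hq
  have hAB : A.append B = c := c.take_spec hq
  have hA : A.IsPath := hc.isPath_takeUntil hq
  have hB : B.IsPath := Walk.IsCycle.isPath_of_append_right (Walk.not_nil_of_ne hpq.ne) (hAB ▸ hc)
  have hAe : s(p, q) ∉ A.reverse.edges := by
    simpa [A] using fun h => hchord (c.edges_takeUntil_subset_edges hq h)
  have hBe : s(p, q) ∉ B.edges := fun h => hchord (c.edges_dropUntil_subset_edges hq h)
  have h1 := girth_le_length ((Walk.cons_isCycle_iff _ hpq).mpr ⟨hA.reverse, hAe⟩)
  have h2 := girth_le_length ((Walk.cons_isCycle_iff _ hpq).mpr ⟨hB, hBe⟩)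
  have hlen : A.length + B.length = c.length := by rw [← hAB, Walk.length_append]
  simp only [Walk.length_cons, Walk.length_reverse] at h1 h2
  omega

lemma Walk.IsCycle.mem_edges_of_adj {u p q : V} {c : G.Walk u u} (hc : c.IsCycle)
    (hg : c.length ≤ G.girth) (hp : p ∈ c.support) (hq : q ∈ c.support) (hpq : G.Adj p q) :
    s(p, q) ∈ c.edges := by
  classical
  by_contra hchord
  have := (hc.rotate hp).two_mul_girth_le_of_adj ((c.mem_support_rotate_iff p hp).mpr hq) hpq
    (fun h => hchord ((c.rotate_edges p hp).perm.mem_iff.mp h))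
  have := hc.three_le_length
  simp only [Walk.length_rotate] at *
  omega

lemma Walk.IsCycle.length_le_card [Fintype V] {u : V} {c : G.Walk u u} (hc : c.IsCycle) :
    c.length ≤ Fintype.card V := by
  have := hc.isPath_tail.length_lt
  rw [← Walk.length_tail_add_one hc.not_nil]
  omega

lemma Walk.IsHamiltonianCycle.card_edgeFinset_le [Fintype V] [DecidableEq V] [DecidableRel G.Adj]
    {u : V} {c : G.Walk u u} (hc : c.IsHamiltonianCycle) (hg : c.length ≤ G.girth) :
    #G.edgeFinset ≤ Fintype.card V := by
  have hsub : G.edgeFinset ⊆ c.edges.toFinset := by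
    intro e he
    induction e using Sym2.ind with
    | _ p q =>
      exact List.mem_toFinset.mpr <|
        hc.isCycle.mem_edges_of_adj hg (hc.mem_support p) (hc.mem_support q) (mem_edgeFinset.mp he)
  calc #G.edgeFinset ≤ #c.edges.toFinset := card_le_card hsub
    _ ≤ c.length := by simpa using c.edges.toFinset_card_le
    _ = Fintype.card V := hc.length_eq

end SimpleGraph

section EdgeCut

variable {V : Type*} {G : SimpleGraph V}

lemma edgeCut_compl [Fintype V] [DecidableEq V] (Y : Finset V) : edgeCut G Yᶜ = edgeCut G Y := by
  ext e
  constructor <;> rintro ⟨he, u, v, rfl, hu, hv⟩ <;>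
    exact ⟨he, v, u, Sym2.eq_swap, by simpa using hv, by simpa using hu⟩

lemma edgeCut_subset_of_forall_adj_mem {S : Set (Sym2 V)} {Y : Finset V}
    (hY : ∀ u ∈ Y, ∀ v, (G.deleteEdges S).Adj u v → v ∈ Y) : edgeCut G Y ⊆ S := by
  rintro _ ⟨he, u, v, rfl, hu, hv⟩
  by_contra hS
  exact hv (hY u hu v (deleteEdges_adj.mpr ⟨he, hS⟩))

lemma ncard_edgeCut_eq_sum_card_sdiff [Fintype V] [DecidableEq V] [DecidableRel G.Adj]
    (Y : Finset V) : (edgeCut G Y).ncard = ∑ v ∈ Y, #(G.neighborFinset v \ Y) := by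
  set D := Y.sigma fun v => G.neighborFinset v \ Y
  have hD : edgeCut G Y = D.image fun d => s(d.1, d.2) := by
    ext e
    simp only [D, edgeCut, Set.mem_ofPred_eq, coe_image, Set.mem_image, mem_coe, mem_sigma,
      mem_sdiff, mem_neighborFinset, Sigma.exists]
    constructor
    · rintro ⟨he, u, v, rfl, hu, hv⟩
      exact ⟨u, v, ⟨hu, he, hv⟩, rfl⟩
    · rintro ⟨u, v, ⟨hu, he, hv⟩, rfl⟩
      exact ⟨he, u, v, rfl, hu, hv⟩
  have hinj : Set.InjOn (fun d : (_ : V) × V => s(d.1, d.2)) D := by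
    rintro ⟨u, v⟩ huv ⟨u', v'⟩ huv' h
    simp only [D, coe_sigma, Set.mem_sigma_iff, mem_coe, mem_sdiff, mem_neighborFinset,
      Sym2.eq, Sym2.rel_iff'] at huv huv' h
    rcases h with ⟨rfl, rfl⟩ | ⟨rfl, rfl⟩
    · rfl
    · exact absurd huv.1 huv'.2.2
  rw [hD, Set.ncard_coe_finset, card_image_of_injOn hinj, card_sigma]

lemma sum_card_neighborFinset_inter [Fintype V] [DecidableEq V] [DecidableRel G.Adj]
    (Y : Finset V) :
    ∑ v ∈ Y, #(G.neighborFinset v ∩ Y) = 2 * #(G.induce (Y : Set V)).edgeFinset := by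
  rw [← sum_degrees_eq_twice_card_edges, ← Finset.sum_coe_sort Y]
  refine Finset.sum_congr rfl fun v _ => ?_
  rw [← card_neighborFinset_eq_degree, ← card_map (.subtype _)]
  convert congrArg card (map_neighborFinset_induce (G := G) v).symm using 3
  · simp
  · ext; simp

lemma sum_degree_eq_two_mul_card_edgeFinset_induce_add_ncard_edgeCut [Fintype V] [DecidableEq V]
    [DecidableRel G.Adj] (Y : Finset V) :
    ∑ v ∈ Y, G.degree v = 2 * #(G.induce (Y : Set V)).edgeFinset + (edgeCut G Y).ncard := by
  rw [← sum_card_neighborFinset_inter, ncard_edgeCut_eq_sum_card_sdiff, ← sum_add_distrib]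
  exact sum_congr rfl fun v _ => by rw [card_inter_add_card_sdiff, card_neighborFinset_eq_degree]

lemma card_le_card_of_disjoint_of_forall_exists_mem {F : Finset (Sym2 V)}
    (hF : ∀ e ∈ F, ∀ f ∈ F, e ≠ f → ∀ v : V, ¬ (v ∈ e ∧ v ∈ f)) {Y : Finset V}
    (hY : ∀ e ∈ F, ∃ v ∈ Y, v ∈ e) : #F ≤ #Y :=
  card_le_card_of_forall_subsingleton (fun e v => v ∈ e) hY
    fun v _ e ⟨he, hve⟩ f ⟨hf, hvf⟩ => by_contra fun hef => hF e he f hf hef v ⟨hve, hvf⟩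

lemma ncard_edgeCut_le_of_subset {F : Finset (Sym2 V)} {f₀ : Sym2 V} {Y : Finset V}
    (hcut : edgeCut G Y ⊆ ↑F ∪ {f₀}) : (edgeCut G Y).ncard ≤ #F + 1 := by
  classical
  rw [Set.union_singleton, ← coe_insert] at hcut
  calc (edgeCut G Y).ncard ≤ #(insert f₀ F) :=
        (Set.ncard_le_ncard hcut (finite_toSet _)).trans_eq (Set.ncard_coe_finset _)
    _ ≤ #F + 1 := card_insert_le _ _

lemma ncard_edgeCut_le_card_add_one {F : Finset (Sym2 V)}
    (hF : ∀ e ∈ F, ∀ f ∈ F, e ≠ f → ∀ v : V, ¬ (v ∈ e ∧ v ∈ f)) {f₀ : Sym2 V} {Y : Finset V}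
    (hcut : edgeCut G Y ⊆ ↑F ∪ {f₀}) : (edgeCut G Y).ncard ≤ #Y + 1 := by
  classical
  set F' := F.filter (· ∈ edgeCut G Y)
  have hF' : #F' ≤ #Y := by
    refine card_le_card_of_disjoint_of_forall_exists_mem
      (fun e he f hf => hF e (mem_filter.mp he).1 f (mem_filter.mp hf).1) fun e he => ?_
    obtain ⟨-, u, v, rfl, hu, -⟩ := (mem_filter.mp he).2
    exact ⟨u, hu, Sym2.mem_mk_left u v⟩
  have hsub : edgeCut G Y ⊆ ↑(insert f₀ F') := by
    intro e he
    rcases hcut he with heF | rfl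
    · simp [F', mem_coe.mp heF, he]
    · simp
  calc (edgeCut G Y).ncard ≤ #(insert f₀ F') :=
        (Set.ncard_le_ncard hsub (finite_toSet _)).trans_eq (Set.ncard_coe_finset _)
    _ ≤ #Y + 1 := (card_insert_le _ _).trans (by omega)

theorem exists_pentagon_of_edgeCut_subset [Fintype V] [DecidableEq V] [DecidableRel G.Adj]
    (hcubic : ∀ v, G.degree v = 3) (hgirth : 5 ≤ G.girth) {F : Finset (Sym2 V)} (hFcard : #F ≤ 4)
    (hF : ∀ e ∈ F, ∀ f ∈ F, e ≠ f → ∀ v : V, ¬ (v ∈ e ∧ v ∈ f)) {f₀ : Sym2 V} {Y : Finset V}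
    (hY : Y.Nonempty) (hY5 : #Y ≤ 5) (hcut : edgeCut G Y ⊆ ↑F ∪ {f₀}) :
    edgeCut G Y = ↑F ∪ {f₀} ∧ #Y = 5 ∧
      ∃ (v : V) (w : G.Walk v v), w.IsCycle ∧ w.length = 5 ∧ ∀ u ∈ w.support, u ∈ Y := by
  set H := G.induce (Y : Set V)
  have hcount : 3 * #Y = 2 * #H.edgeFinset + (edgeCut G Y).ncard := by
    rw [← sum_degree_eq_two_mul_card_edgeFinset_induce_add_ncard_edgeCut,
      sum_congr rfl fun v _ => hcubic v, sum_const, smul_eq_mul, mul_comm]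
  have hk₁ := ncard_edgeCut_le_card_add_one hF hcut
  have hk₂ := ncard_edgeCut_le_of_subset hcut
  have hcardY : Fintype.card (Y : Set V) = #Y := by simp
  obtain ⟨x, c, hc⟩ : ∃ (x : (Y : Set V)) (c : H.Walk x x), c.IsCycle := by
    have : Nonempty (Y : Set V) := hY.to_subtype
    by_contra! hacyc
    have := IsAcyclic.card_edgeFinset_lt_card (G := H) fun x c => hacyc x c
    omega
  set ι := Embedding.induce (G := G) (Y : Set V)
  have hmap := hc.map (f := ι.toHom) ι.injective
  have hlen₁ : 5 ≤ c.length := by simpa using hgirth.trans (girth_le_length hmap)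
  have hlen₂ := hc.length_le_card
  have hH : c.IsHamiltonianCycle :=
    Walk.isHamiltonianCycle_iff_isCycle_and_length_eq.mpr ⟨hc, by omega⟩
  have hgirthH : G.girth ≤ H.girth := ι.isContained.girth_le fun h => h c hc
  have hedges := hH.card_edgeFinset_le (by omega)
  have hFf₀ : (↑F ∪ {f₀} : Set (Sym2 V)).ncard ≤ 5 :=
    (Set.ncard_union_le _ _).trans (by simp; omega)
  refine ⟨Set.eq_of_subset_of_ncard_le hcut (by omega) (Set.toFinite _), by omega,
    ι.toHom x, c.map ι.toHom, hmap, by rw [Walk.length_map]; omega, ?_⟩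
  simp only [Walk.support_map, List.mem_map]
  rintro _ ⟨y, -, rfl⟩
  exact y.2

end EdgeCut

theorem matching_cut_gives_pentagon_general
    {V : Type} [Fintype V] [DecidableEq V]
    (G : SimpleGraph V) [DecidableRel G.Adj]
    (htheta : ThetaConnected G)
    (F : Finset (Sym2 V)) (hFcard : F.card = 4)
    (hFmatching : ∀ e ∈ F, ∀ f ∈ F, e ≠ f → ∀ v : V, ¬ (v ∈ e ∧ v ∈ f))
    (f0 : Sym2 V)
    (hbridge : (G.deleteEdges ↑F).IsBridge f0) :
    ∃ Y : Finset V, edgeCut G Y = ↑F ∪ {f0} ∧ Y.card = 5 ∧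
      ∃ (v : V) (w : G.Walk v v), w.IsCycle ∧ w.length = 5 ∧
        ∀ u ∈ w.support, u ∈ Y := by
  obtain ⟨hcubic, hgirth, hcut6⟩ := htheta
  induction f0 using Sym2.ind with
  | _ a b =>
  classical
  rw [isBridge_iff, deleteEdges_deleteEdges] at hbridge
  set Y := univ.filter ((G.deleteEdges (↑F ∪ {s(a, b)})).Reachable a)
  have ha : a ∈ Y := by simp [Y]
  have hb : b ∈ Yᶜ := by simpa [Y] using hbridge
  have hcut : edgeCut G Y ⊆ ↑F ∪ {s(a, b)} := edgeCut_subset_of_forall_adj_mem fun u hu v huv => by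
    simp only [Y, mem_filter, mem_univ, true_and] at hu ⊢
    exact hu.trans huv.reachable
  have hsmall : #Y ≤ 5 ∨ #Yᶜ ≤ 5 := by
    by_contra! h
    have := hcut6 Y (by omega) (by omega)
    have := ncard_edgeCut_le_of_subset hcut
    omega
  rcases hsmall with hY | hY
  · exact ⟨Y, exists_pentagon_of_edgeCut_subset hcubic hgirth hFcard.le hFmatching ⟨a, ha⟩ hY hcut⟩
  · rw [← edgeCut_compl] at hcut
    exact ⟨Yᶜ, exists_pentagon_of_edgeCut_subset hcubic hgirth hFcard.le hFmatching ⟨b, hb⟩ hY hcut⟩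

/-- if `G` is a theta-connected (cubic) graph, `F` is a matching of four
edges of `G`, and `G ∖ F` has a cut-edge `f0`, then there is a set `Y` of five vertices
with `δ_G(Y) = F ∪ {f0}` containing a cycle of `G` of length exactly five. -/
theorem matching_cut_gives_pentagon
    {V : Type} [Fintype V] [DecidableEq V]
    (G : SimpleGraph V) [DecidableRel G.Adj]
    (htheta : ThetaConnected G)
    (F : Finset (Sym2 V)) (hFcard : F.card = 4)
    (hFedges : ↑F ⊆ G.edgeSet)
    (hFmatching : ∀ e ∈ F, ∀ f ∈ F, e ≠ f → ∀ v : V, ¬ (v ∈ e ∧ v ∈ f))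
    (f0 : Sym2 V)
    (hbridge : (G.deleteEdges ↑F).IsBridge f0) :
    ∃ Y : Finset V, edgeCut G Y = ↑F ∪ {f0} ∧ Y.card = 5 ∧
      ∃ (v : V) (w : G.Walk v v), w.IsCycle ∧ w.length = 5 ∧
        ∀ u ∈ w.support, u ∈ Y :=
  matching_cut_gives_pentagon_general G htheta F hFcard hFmatching f0 hbridge
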